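/- arXiv:2301.04350 — 4 statements merged into one kernel-verified Lean document; each statement's English description precedes it below -/
import Mathlib

section
/- There exists a finite set of disks in the plane admitting no proper assignment. Specifically, for the five-disk configuration of Figure 2 (disks d_1, d_2 each containing the center of d_3, with d_4 inside d_1's reach only via a merge of d_3, and d_5 symmetric w.r.t. d_2), every candidate assignment violates one of the three properness conditions. -/
open scoped Classical

noncomputable section

abbrev Pt := EuclideanSpace ℝ (Fin 2)

/-- The aggregate radius of a disk `i` under an assignment `φ`:
`r_i(φ) = Σ_{j : φ j = i} r j`. -/
def aggRadius {n : ℕ} (r : Fin n → ℝ) (φ : Fin n → Fin n) (i : Fin n) : ℝ :=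
  ∑ j ∈ Finset.univ.filter (fun j => φ j = i), r j

/-- A *proper assignment* for disks with centres `p` and radii `r`:
(0) `φ` is an assignment (`φ ∘ φ = φ`);
(1) disks merged with a selected disk `i` form a prefix of the other disks ordered by
    distance from `p i`: any disk strictly closer to `i` than a merged disk is merged;
(2) a merged disk's centre lies strictly within the merging disk after all strictly
    closer disks are merged: `dist (p j) (p i) < r i + Σ_{k closer than j} r k`;
(3) selected disks are pairwise centre-disjoint with respect to aggregate radii:
    `r_i(φ) + r_j(φ) ≤ dist (p i) (p j)`. -/
def IsProper {n : ℕ} (p : Fin n → Pt) (r : Fin n → ℝ) (φ : Fin n → Fin n) : Prop :=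
  (∀ d, φ (φ d) = φ d) ∧
  (∀ i j k, φ j = i → j ≠ i → k ≠ i →
    dist (p k) (p i) < dist (p j) (p i) → φ k = i) ∧
  (∀ i j, φ j = i → j ≠ i →
    dist (p j) (p i) < r i + ∑ k ∈ Finset.univ.filter
      (fun k => k ≠ i ∧ k ≠ j ∧ dist (p k) (p i) < dist (p j) (p i)), r k) ∧
  (∀ i j, φ i = i → φ j = j → i ≠ j →
    aggRadius r φ i + aggRadius r φ j ≤ dist (p i) (p j))

/-- Integer coordinates (on a line) of the five-disk configuration. -/
def Xz : Fin 5 → ℤ := ![0, 60, 30, 19, 41]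

/-- Integer radii of the five-disk configuration. -/
def Rz : Fin 5 → ℤ := ![32, 32, 1, 1, 1]

/-- Integer version of the aggregate radius. -/
abbrev aggZ (φ : Fin 5 → Fin 5) (i : Fin 5) : ℤ :=
  ∑ j ∈ Finset.univ.filter (fun j => φ j = i), Rz j

/-- Integer (decidable) version of `IsProper` for this configuration. -/
abbrev Pz (φ : Fin 5 → Fin 5) : Prop :=
  (∀ d, φ (φ d) = φ d) ∧
  (∀ i j k, φ j = i → j ≠ i → k ≠ i →
    |Xz k - Xz i| < |Xz j - Xz i| → φ k = i) ∧
  (∀ i j, φ j = i → j ≠ i →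
    |Xz j - Xz i| < Rz i + ∑ k ∈ Finset.univ.filter
      (fun k => k ≠ i ∧ k ≠ j ∧ |Xz k - Xz i| < |Xz j - Xz i|), Rz k) ∧
  (∀ i j, φ i = i → φ j = j → i ≠ j →
    aggZ φ i + aggZ φ j ≤ |Xz i - Xz j|)

set_option maxRecDepth 100000 in
lemma noPz5 : ∀ a b c d e : Fin 5, ¬ Pz ![a, b, c, d, e] := by decide

lemma noPz : ∀ φ : Fin 5 → Fin 5, ¬ Pz φ := by
  intro φ h
  have hφ : φ = ![φ 0, φ 1, φ 2, φ 3, φ 4] := by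
    funext x; fin_cases x <;> rfl
  rw [hφ] at h
  exact noPz5 _ _ _ _ _ h

/-- The centres as points of the plane. -/
def pp : Fin 5 → Pt := fun i => WithLp.toLp 2 ![(Xz i : ℝ), 0]

lemma dist_pp (i j : Fin 5) : dist (pp i) (pp j) = ((|Xz i - Xz j| : ℤ) : ℝ) := by
  rw [EuclideanSpace.dist_eq, Fin.sum_univ_two]
  simp only [pp, PiLp.toLp_apply, Matrix.cons_val_zero, Matrix.cons_val_one, Matrix.head_cons, sub_self]
  rw [Real.dist_eq, dist_self, show ((0:ℝ))^2 = 0 by norm_num, add_zero,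
    Real.sqrt_sq_eq_abs, Int.cast_abs, Int.cast_sub]
  exact abs_abs _

/-- There exists a finite set of disks in the plane (a five-disk configuration, as in
Figure 2 of the paper) admitting no proper assignment: every candidate assignment
violates one of the three properness conditions. -/
theorem exists_no_proper_assignment :
    ∃ (p : Fin 5 → Pt) (r : Fin 5 → ℝ),
      (∀ i, 0 < r i) ∧ ∀ φ : Fin 5 → Fin 5, ¬ IsProper p r φ := by
  refine ⟨pp, fun i => (Rz i : ℝ), ?_, ?_⟩
  · intro i; fin_cases i <;> norm_num [Rz]
  · intro φ h
    obtain ⟨h0, h1, h2, h3⟩ := h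
    refine noPz φ ⟨h0, ?_, ?_, ?_⟩
    · intro i j k hj hji hki hd
      refine h1 i j k hj hji hki ?_
      rw [dist_pp, dist_pp]
      exact_mod_cast hd
    · intro i j hj hji
      have := h2 i j hj hji
      simp only [dist_pp, Int.cast_lt] at this
      have hs : (∑ k ∈ Finset.univ.filter
          (fun k => k ≠ i ∧ k ≠ j ∧ |Xz k - Xz i| < |Xz j - Xz i|), ((Rz k : ℤ) : ℝ))
          = ((∑ k ∈ Finset.univ.filter
          (fun k => k ≠ i ∧ k ≠ j ∧ |Xz k - Xz i| < |Xz j - Xz i|), Rz k : ℤ) : ℝ) := by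
        push_cast; rfl
      rw [hs] at this
      exact_mod_cast this
    · intro i j hi hjj hij
      have := h3 i j hi hjj hij
      rw [dist_pp] at this
      have ha : ∀ m, aggRadius (fun k => ((Rz k : ℤ) : ℝ)) φ m = ((aggZ φ m : ℤ) : ℝ) := by
        intro m; unfold aggRadius aggZ; push_cast; rfl
      rw [ha, ha] at this
      exact_mod_cast this

end
end

section
/- In the Not gadget, in any proper assignment the shared mdisks m_1 and m_2 are either both merged with sdisk s_1 (merged in) or both merged outside the gadget (merged out). -/
open scoped Classical

noncomputable section

/-- The Not gadget.  Within a configuration of disks containing sdisks `s₁, s₂` and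
mdisks `m₁, m₂, m₃, m₄` such that: `s₁, s₂` are selected; `m₄` must be merged with
`s₁` or `s₂` (its centre lies in both and in no other disk); `m₃` is closer to `s₁`
than `m₄` and closer to `s₂` than `m₄`; `m₁` and `m₂` are farther from `s₁` than `m₃`
but closer than `m₄`; and `m₁, m₂` cannot be merged with `s₂`.  Then in any proper
assignment the shared mdisks `m₁` and `m₂` are either both merged with `s₁`
(merged in) or both merged outside the gadget (merged out). -/
theorem not_gadget {n : ℕ} (p : Fin n → Pt) (r : Fin n → ℝ) (hr : ∀ i, 0 < r i)
    (s₁ s₂ m₁ m₂ m₃ m₄ : Fin n)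
    (hdistinct : [s₁, s₂, m₁, m₂, m₃, m₄].Pairwise (· ≠ ·))
    (φ : Fin n → Fin n) (hφ : IsProper p r φ)
    (hs₁ : φ s₁ = s₁) (hs₂ : φ s₂ = s₂)
    (hm₄ : φ m₄ = s₁ ∨ φ m₄ = s₂)
    (h₃₁ : dist (p m₃) (p s₁) < dist (p m₁) (p s₁))
    (h₃₂ : dist (p m₃) (p s₁) < dist (p m₂) (p s₁))
    (h₁₄ : dist (p m₁) (p s₁) < dist (p m₄) (p s₁))
    (h₂₄ : dist (p m₂) (p s₁) < dist (p m₄) (p s₁))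
    (h₃₄ : dist (p m₃) (p s₂) < dist (p m₄) (p s₂))
    (hm₁s₂ : φ m₁ ≠ s₂) (hm₂s₂ : φ m₂ ≠ s₂) :
    (φ m₁ = s₁ ∧ φ m₂ = s₁) ∨ (φ m₁ ≠ s₁ ∧ φ m₂ ≠ s₁) := by
  obtain ⟨-, hpre, -, -⟩ := hφ
  simp only [List.pairwise_cons, List.mem_cons] at hdistinct
  obtain ⟨hd1, hd2, hd3, hd4, hd5, -⟩ := hdistinct
  have hs12 : s₁ ≠ s₂ := hd1 s₂ (by simp)
  have h1s1 : m₁ ≠ s₁ := fun h => hd1 m₁ (by simp) h.symm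
  have h2s1 : m₂ ≠ s₁ := fun h => hd1 m₂ (by simp) h.symm
  have h3s1 : m₃ ≠ s₁ := fun h => hd1 m₃ (by simp) h.symm
  have h4s1 : m₄ ≠ s₁ := fun h => hd1 m₄ (by simp) h.symm
  have h3s2 : m₃ ≠ s₂ := fun h => hd2 m₃ (by simp) h.symm
  have h4s2 : m₄ ≠ s₂ := fun h => hd2 m₄ (by simp) h.symm
  rcases hm₄ with h4 | h4
  · exact Or.inl ⟨hpre s₁ m₄ m₁ h4 h4s1 h1s1 h₁₄, hpre s₁ m₄ m₂ h4 h4s1 h2s1 h₂₄⟩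
  · have h3 : φ m₃ = s₂ := hpre s₂ m₄ m₃ h4 h4s2 h3s2 h₃₄
    refine Or.inr ⟨fun h1 => ?_, fun h2 => ?_⟩
    · exact hs12 ((hpre s₁ m₁ m₃ h1 h1s1 h3s1 h₃₁).symm.trans h3)
    · exact hs12 ((hpre s₁ m₂ m₃ h2 h2s1 h3s1 h₃₂).symm.trans h3)

end
end

section
/- In the two-mdisk Copy gadget, in any proper assignment: if shared mdisk m_1 is merged in (with an sdisk of the gadget), then shared mdisk m_2 is merged out, and if m_1 is merged out, then m_2 is merged in. -/
open scoped Classical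

noncomputable section

/-- The two-mdisk Copy gadget.  Within a configuration of disks containing sdisks
`s₁, s₂` and mdisks `m₁, m₂, m₃, m₄` such that: `s₁, s₂` are selected; `m₃` must be
merged with `s₁` or `s₂` (its centre lies in both); the distance orders satisfy
`m₄ < m₁ < m₃` towards `s₁` and `m₄ < m₂ < m₃` towards `s₂`; `m₁` cannot be merged
with `s₂` and `m₂` cannot be merged with `s₁`.  Then in any proper assignment: if the
shared mdisk `m₁` is merged in (with `s₁`), then `m₂` is merged out (not with `s₂`),
and if `m₁` is merged out, then `m₂` is merged in. -/
theorem copy_gadget {n : ℕ} (p : Fin n → Pt) (r : Fin n → ℝ) (hr : ∀ i, 0 < r i)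
    (s₁ s₂ m₁ m₂ m₃ m₄ : Fin n)
    (hdistinct : [s₁, s₂, m₁, m₂, m₃, m₄].Pairwise (· ≠ ·))
    (φ : Fin n → Fin n) (hφ : IsProper p r φ)
    (hs₁ : φ s₁ = s₁) (hs₂ : φ s₂ = s₂)
    (hm₃ : φ m₃ = s₁ ∨ φ m₃ = s₂)
    (h₄₁ : dist (p m₄) (p s₁) < dist (p m₁) (p s₁))
    (h₁₃ : dist (p m₁) (p s₁) < dist (p m₃) (p s₁))
    (h₄₂ : dist (p m₄) (p s₂) < dist (p m₂) (p s₂))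
    (h₂₃ : dist (p m₂) (p s₂) < dist (p m₃) (p s₂))
    (hm₁s₂ : φ m₁ ≠ s₂) (hm₂s₁ : φ m₂ ≠ s₁) :
    (φ m₁ = s₁ → φ m₂ ≠ s₂) ∧ (φ m₁ ≠ s₁ → φ m₂ = s₂) := by
  simp only [List.pairwise_cons, List.mem_cons, List.mem_singleton,
    List.not_mem_nil] at hdistinct
  obtain ⟨hd1, hd2, hd3, hd4, hd5, -⟩ := hdistinct
  have hss : s₁ ≠ s₂ := hd1 s₂ (by simp)
  have hm₁s₁ : m₁ ≠ s₁ := fun h => (hd1 m₁ (by simp)) h.symm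
  have hm₂s₂ : m₂ ≠ s₂ := fun h => (hd2 m₂ (by simp)) h.symm
  have hm₃s₁ : m₃ ≠ s₁ := fun h => (hd1 m₃ (by simp)) h.symm
  have hm₃s₂ : m₃ ≠ s₂ := fun h => (hd2 m₃ (by simp)) h.symm
  have hm₄s₁ : m₄ ≠ s₁ := fun h => (hd1 m₄ (by simp)) h.symm
  have hm₄s₂ : m₄ ≠ s₂ := fun h => (hd2 m₄ (by simp)) h.symm
  obtain ⟨-, hpref, -, -⟩ := hφ
  rcases hm₃ with h3 | h3
  · -- m₃ merged with s₁ : m₁, m₄ merged with s₁, so m₂ not with s₂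
    have hφm₁ : φ m₁ = s₁ :=
      hpref s₁ m₃ m₁ h3 hm₃s₁ hm₁s₁ h₁₃
    have hφm₄ : φ m₄ = s₁ :=
      hpref s₁ m₃ m₄ h3 hm₃s₁ hm₄s₁ (h₄₁.trans h₁₃)
    have hm₂ : φ m₂ ≠ s₂ := by
      intro h2
      have : φ m₄ = s₂ := hpref s₂ m₂ m₄ h2 hm₂s₂ hm₄s₂ h₄₂
      exact hss (hφm₄ ▸ this)
    exact ⟨fun _ => hm₂, fun h => absurd hφm₁ h⟩
  · -- m₃ merged with s₂ : m₂, m₄ merged with s₂, so m₁ not with s₁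
    have hφm₂ : φ m₂ = s₂ :=
      hpref s₂ m₃ m₂ h3 hm₃s₂ hm₂s₂ h₂₃
    have hφm₄ : φ m₄ = s₂ :=
      hpref s₂ m₃ m₄ h3 hm₃s₂ hm₄s₂ (h₄₂.trans h₂₃)
    have hm₁ : φ m₁ ≠ s₁ := by
      intro h1
      have : φ m₄ = s₁ := hpref s₁ m₁ m₄ h1 hm₁s₁ hm₄s₁ h₄₁
      exact hss (this ▸ hφm₄)
    exact ⟨fun h => absurd h hm₁, fun _ => hφm₂⟩

end
end

section
/- Let D be n disks with collinear centers sorted by x-coordinate as d_1, ..., d_n. In any proper assignment φ of a prefix {d_1, ..., d_x}, if d_y is the right-most selected disk then all disks d_{y+1}, ..., d_x are merged with d_y. -/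
open scoped Classical

noncomputable section

theorem dist_toLp_pair_zero (a b : ℝ) :
    dist (α := Pt) (WithLp.toLp 2 ![a, 0]) (WithLp.toLp 2 ![b, 0]) = |a - b| := by
  simp [EuclideanSpace.dist_eq, Fin.sum_univ_two, Real.dist_eq, sq_abs, Real.sqrt_sq_eq_abs]

namespace IsProper

variable {n : ℕ} {p : Fin n → Pt} {r : Fin n → ℝ} {φ : Fin n → Fin n}

/-- By the prefix condition, `k` would have to be merged with `i` first. -/
theorem apply_ne_of_dist_lt (hφ : IsProper p r φ) {i j k : Fin n} (hk : φ k = k) (hki : k ≠ i)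
    (hdist : dist (p k) (p i) < dist (p j) (p i)) : φ j ≠ i := by
  intro hji
  have hji' : j ≠ i := by
    rintro rfl
    exact (dist_self (p j) ▸ hdist).not_ge dist_nonneg
  exact hki (hk ▸ hφ.2.1 i j k hji hji' hki hdist)

end IsProper

theorem abs_sub_lt_abs_sub_of_lt_of_lt {a b c : ℝ} (hab : a < b) (hbc : b < c) :
    |b - a| < |c - a| := by
  rw [abs_of_pos (sub_pos.2 hab), abs_of_pos (sub_pos.2 (hab.trans hbc))]
  linarith

theorem collinear_rightmost_merge_general {n : ℕ} (xc : Fin n → ℝ) (hx : StrictMono xc)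
    (r : Fin n → ℝ)
    (φ : Fin n → Fin n)
    (hφ : IsProper (fun i => WithLp.toLp 2 ![xc i, 0]) r φ)
    (y : Fin n) (hy : φ y = y)
    (hrm : ∀ j, y < j → φ j ≠ j) :
    ∀ j, y < j → φ j = y := by
  intro j hj
  by_contra hjy
  have hw_le : φ j ≤ y := not_lt.1 fun h => hrm _ h (hφ.1 j)
  have hw_lt : φ j < y := lt_of_le_of_ne hw_le hjy
  refine hφ.apply_ne_of_dist_lt hy hw_lt.ne' ?_ rfl
  simp only [dist_toLp_pair_zero]
  exact abs_sub_lt_abs_sub_of_lt_of_lt (hx hw_lt) (hx hj)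

/-- Collinear centres: let the disks `d_0, …, d_{n−1}` have centres on the x-axis,
sorted by strictly increasing x-coordinate.  In any proper assignment `φ`, if `d_y`
is the right-most selected disk, then every disk to the right of `d_y` is merged
with `d_y`. -/
theorem collinear_rightmost_merge {n : ℕ} (xc : Fin n → ℝ) (hx : StrictMono xc)
    (r : Fin n → ℝ) (hr : ∀ i, 0 < r i)
    (φ : Fin n → Fin n)
    (hφ : IsProper (fun i => WithLp.toLp 2 ![xc i, 0]) r φ)
    (y : Fin n) (hy : φ y = y)
    (hrm : ∀ j, y < j → φ j ≠ j) :
    ∀ j, y < j → φ j = y :=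
  collinear_rightmost_merge_general xc hx r φ hφ y hy hrm

end
end
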